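/- arXiv:1604.04706 — 2 statements merged into one kernel-verified Lean document; each statement's English description precedes it below -/
import Mathlib

section
/- If b_i = -log Σ_{k=1}^K exp(w_k^T x_i) for every i, then the doubly-separable objective L_2(W,B) = Σ_{i,k} [ (λ/(2N))||w_k||² - y_{ik} w_k^T x_i/N + exp(w_k^T x_i + b_i) - b_i/(KN) - 1/K ] equals the original MLR objective L_1(W) = (λ/2)Σ_k||w_k||² - (1/N)Σ_{i,k} y_{ik} w_k^T x_i + (1/N)Σ_i log Σ_k exp(w_k^T x_i). -/
/-! With `bᵢ = -log ∑ₖ exp (wₖᵀxᵢ)` the numbers `exp (wₖᵀxᵢ + bᵢ)` are the softmax probabilities of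
sample `i`, so they sum to `1` over `k` and cancel the constant `∑ₖ 1/K = 1`; the remaining term
`-∑ₖ bᵢ/(KN) = log ∑ₖ exp (wₖᵀxᵢ) / N` is exactly the log-partition term of the MLR objective. -/

open Finset Real

section
variable {κ : Type*} [Fintype κ] [Nonempty κ]

theorem Real.sum_exp_add_neg_log_sum_exp (z : κ → ℝ) :
    ∑ k, exp (z k + -log (∑ j, exp (z j))) = 1 := by
  have hS : 0 < ∑ j, exp (z j) := sum_pos (fun j _ => exp_pos (z j)) univ_nonempty
  simp only [exp_add, ← sum_mul, exp_neg, exp_log hS]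
  exact mul_inv_cancel₀ hS.ne'

theorem sum_dsmlr_summand_eq (c n : ℝ) (r y z : κ → ℝ) :
    ∑ k, (c * r k - y k * z k / n + exp (z k + -log (∑ j, exp (z j)))
        - -log (∑ j, exp (z j)) / (Fintype.card κ * n) - 1 / Fintype.card κ)
      = c * ∑ k, r k - (∑ k, y k * z k) / n + log (∑ j, exp (z j)) / n := by
  have hcard : (Fintype.card κ : ℝ) ≠ 0 := Nat.cast_ne_zero.mpr Fintype.card_ne_zero
  simp only [sum_sub_distrib, sum_add_distrib, Real.sum_exp_add_neg_log_sum_exp, sum_const,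
    card_univ, nsmul_eq_mul, ← mul_sum, ← sum_div]
  field_simp
  ring

end

theorem dsmlr_eq_mlr_at_optimal_b_general (d N K : ℕ) (hN : 0 < N) (hK : 0 < K)
    (lam : ℝ)
    (x : Fin N → EuclideanSpace ℝ (Fin d)) (y : Fin N → Fin K → ℝ)
    (W : Fin K → EuclideanSpace ℝ (Fin d)) (b : Fin N → ℝ)
    (hb : ∀ i, b i = -Real.log (∑ k, Real.exp (inner ℝ (W k) (x i) : ℝ))) :
    (∑ i, ∑ k,
      (lam / (2 * N) * ‖W k‖ ^ 2 - y i k * (inner ℝ (W k) (x i) : ℝ) / N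
        + Real.exp ((inner ℝ (W k) (x i) : ℝ) + b i) - b i / (K * N) - 1 / K))
    = lam / 2 * ∑ k, ‖W k‖ ^ 2
      - (1 / N) * ∑ i, ∑ k, y i k * (inner ℝ (W k) (x i) : ℝ)
      + (1 / N) * ∑ i, Real.log (∑ k, Real.exp (inner ℝ (W k) (x i) : ℝ)) := by
  have : NeZero K := ⟨hK.ne'⟩
  have hN' : (N : ℝ) ≠ 0 := by positivity
  obtain rfl : b = fun i => -log (∑ k, exp (inner ℝ (W k) (x i))) := funext hb
  have hrow (i : Fin N) := sum_dsmlr_summand_eq (lam / (2 * N)) N (fun k => ‖W k‖ ^ 2) (y i)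
    (fun k => inner ℝ (W k) (x i))
  simp only [Fintype.card_fin] at hrow
  simp only [hrow, sum_add_distrib, sum_sub_distrib, sum_const, card_univ, Fintype.card_fin,
    nsmul_eq_mul, ← sum_div]
  field_simp

/-- If each `bᵢ = -log ∑ₖ exp(wₖᵀxᵢ)`, then the doubly-separable objective `L₂(W, B)`
equals the original MLR objective `L₁(W)`. -/
theorem dsmlr_eq_mlr_at_optimal_b (d N K : ℕ) (hN : 0 < N) (hK : 0 < K)
    (lam : ℝ) (hlam : 0 < lam)
    (x : Fin N → EuclideanSpace ℝ (Fin d)) (y : Fin N → Fin K → ℝ)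
    (hy01 : ∀ i k, y i k = 0 ∨ y i k = 1) (hy : ∀ i, ∑ k, y i k = 1)
    (W : Fin K → EuclideanSpace ℝ (Fin d)) (b : Fin N → ℝ)
    (hb : ∀ i, b i = -Real.log (∑ k, Real.exp (inner ℝ (W k) (x i) : ℝ))) :
    (∑ i, ∑ k,
      (lam / (2 * N) * ‖W k‖ ^ 2 - y i k * (inner ℝ (W k) (x i) : ℝ) / N
        + Real.exp ((inner ℝ (W k) (x i) : ℝ) + b i) - b i / (K * N) - 1 / K))
    = lam / 2 * ∑ k, ‖W k‖ ^ 2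
      - (1 / N) * ∑ i, ∑ k, y i k * (inner ℝ (W k) (x i) : ℝ)
      + (1 / N) * ∑ i, Real.log (∑ k, Real.exp (inner ℝ (W k) (x i) : ℝ)) :=
  dsmlr_eq_mlr_at_optimal_b_general d N K hN hK lam x y W b hb
end

section
/- Gradient error lemma: Let a(W) = -log Σ_c exp(x^T w_c). For two parameter matrices W, W' ∈ (R^d)^K with each column bounded by R in norm and ||x|| ≤ r, define the approximate gradient G̃ with c-th block λ w'_c - [y = c] x + exp(x^T w'_c + a(W)) x and the true gradient ∇f(W') with c-th block λ w'_c - [y = c] x + exp(x^T w'_c + a(W')) x. Then ||G̃ - ∇f(W')|| ≤ C(r, R, K) ||W' - W|| for a constant C(r,R,K) depending only on r, R, K (and in particular independent of d). -/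
/-!
Write `s_c = xᵀw_c`, `s'_c = xᵀw'_c`, `S = ∑ exp s_c` and `S' = ∑ exp s'_c`. The weights
`exp s'_c` are positive, so the error has norm at most `‖x‖ |1/S - 1/S'| S' = ‖x‖ |S' - S| / S`.
Termwise `|exp s'_c - exp s_c| ≤ exp s_c · |s'_c - s_c| · exp |s'_c - s_c|` with
`|s'_c - s_c| ≤ r ‖w'_c - w_c‖ ≤ 2rR`, so `|S' - S| ≤ r e^{2rR} ‖W' - W‖ S`, and
`C = r² e^{2rR}` works for every `d` and `K`.
-/

open Real Finset

lemma Real.abs_exp_sub_one_le_abs_mul_exp_abs (t : ℝ) : |exp t - 1| ≤ |t| * exp |t| := by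
  have h := Complex.norm_exp_sub_sum_le_norm_mul_exp t 1
  rwa [sum_range_one, pow_zero, Nat.factorial_zero, Nat.cast_one, div_one, pow_one,
    ← Complex.ofReal_exp, ← Complex.ofReal_one, ← Complex.ofReal_sub, Complex.norm_real,
    Complex.norm_real, Real.norm_eq_abs, Real.norm_eq_abs] at h

lemma Real.abs_exp_sub_exp_le (a b : ℝ) :
    |exp b - exp a| ≤ exp a * (|b - a| * exp |b - a|) := calc
  |exp b - exp a| = exp a * |exp (b - a) - 1| := by
    rw [← abs_of_pos (exp_pos a), ← abs_mul, abs_of_pos (exp_pos a), mul_sub, ← exp_add,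
      add_sub_cancel, mul_one]
  _ ≤ exp a * (|b - a| * exp |b - a|) := by
    gcongr; exact abs_exp_sub_one_le_abs_mul_exp_abs _

variable {ι : Type*}

/-- `ε` is the size of the perturbation the estimate is linear in; `δ` is a cruder a priori
bound that only enters through the factor `exp δ`. -/
lemma abs_sum_exp_sub_sum_exp_le (s : Finset ι) {a b : ι → ℝ} {δ ε : ℝ}
    (hδ : ∀ i ∈ s, |b i - a i| ≤ δ) (hε : ∀ i ∈ s, |b i - a i| ≤ ε) :
    |∑ i ∈ s, exp (b i) - ∑ i ∈ s, exp (a i)| ≤ ε * exp δ * ∑ i ∈ s, exp (a i) := by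
  rw [← sum_sub_distrib, mul_sum]
  refine (abs_sum_le_sum_abs _ _).trans (sum_le_sum fun i hi => ?_)
  calc |exp (b i) - exp (a i)| ≤ exp (a i) * (|b i - a i| * exp |b i - a i|) :=
        abs_exp_sub_exp_le _ _
    _ ≤ exp (a i) * (ε * exp δ) := by
        gcongr
        exacts [(abs_nonneg _).trans (hε i hi), hε i hi, hδ i hi]
    _ = ε * exp δ * exp (a i) := mul_comm _ _

lemma sqrt_sum_norm_mul_smul_sq_le {E : Type*} [SeminormedAddCommGroup E] [NormedSpace ℝ E]
    (s : Finset ι) {a : ι → ℝ} (ha : ∀ i ∈ s, 0 ≤ a i) (t : ℝ) (x : E) :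
    √(∑ i ∈ s, ‖(a i * t) • x‖ ^ 2) ≤ |t| * ‖x‖ * ∑ i ∈ s, a i := by
  rw [sqrt_le_left (mul_nonneg (by positivity) (sum_nonneg ha))]
  calc ∑ i ∈ s, ‖(a i * t) • x‖ ^ 2 = (|t| * ‖x‖) ^ 2 * ∑ i ∈ s, a i ^ 2 := by
        rw [mul_sum]
        refine sum_congr rfl fun i _ => ?_
        rw [norm_smul, norm_mul, Real.norm_eq_abs, Real.norm_eq_abs, mul_pow, mul_pow, mul_pow,
          sq_abs, sq_abs]
        ring
    _ ≤ (|t| * ‖x‖) ^ 2 * (∑ i ∈ s, a i) ^ 2 := by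
        gcongr; exact sum_sq_le_sq_sum_of_nonneg ha
    _ = (|t| * ‖x‖ * ∑ i ∈ s, a i) ^ 2 := by ring

lemma sqrt_sum_norm_exp_mul_one_div_sub_smul_sq_le [Fintype ι] {E : Type*}
    [SeminormedAddCommGroup E] [NormedSpace ℝ E] (a b : ι → ℝ) (x : E) :
    √(∑ i, ‖(exp (b i) * (1 / ∑ j, exp (a j) - 1 / ∑ j, exp (b j))) • x‖ ^ 2)
      ≤ ‖x‖ * (|∑ j, exp (b j) - ∑ j, exp (a j)| / ∑ j, exp (a j)) := by
  rcases isEmpty_or_nonempty ι with hι | hι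
  · simp
  set Sa := ∑ j, exp (a j)
  set Sb := ∑ j, exp (b j)
  have hSa : 0 < Sa := sum_pos (fun j _ => exp_pos _) univ_nonempty
  have hSb : 0 < Sb := sum_pos (fun j _ => exp_pos _) univ_nonempty
  calc _ ≤ |1 / Sa - 1 / Sb| * ‖x‖ * Sb :=
        sqrt_sum_norm_mul_smul_sq_le univ (fun i _ => (exp_pos _).le) _ x
    _ = ‖x‖ * |(1 / Sa - 1 / Sb) * Sb| := by rw [abs_mul, abs_of_pos hSb]; ring
    _ = ‖x‖ * (|Sb - Sa| / Sa) := by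
        rw [show (1 / Sa - 1 / Sb) * Sb = (Sb - Sa) / Sa by field_simp, abs_div, abs_of_pos hSa]

theorem gradient_error_lemma_general (K : ℕ) (r R : ℝ) :
    ∃ C : ℝ, 0 ≤ C ∧
      ∀ (d : ℕ) (lam : ℝ) (_ : 0 < lam) (y : Fin K)
        (x : EuclideanSpace ℝ (Fin d)) (_ : ‖x‖ ≤ r)
        (W W' : Fin K → EuclideanSpace ℝ (Fin d))
        (_ : ∀ c, ‖W c‖ ≤ R) (_ : ∀ c, ‖W' c‖ ≤ R),
        Real.sqrt (∑ c, ‖(Real.exp (inner ℝ x (W' c) : ℝ) *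
            (1 / (∑ j, Real.exp (inner ℝ x (W j) : ℝ))
              - 1 / (∑ j, Real.exp (inner ℝ x (W' j) : ℝ)))) • x‖ ^ 2)
          ≤ C * Real.sqrt (∑ c, ‖W' c - W c‖ ^ 2) := by
  refine ⟨r ^ 2 * exp (2 * r * R), by positivity, ?_⟩
  intro d lam _ y x hx W W' hW hW'
  have hr : 0 ≤ r := (norm_nonneg x).trans hx
  have hinner (c : Fin K) :
      |inner ℝ x (W' c) - inner ℝ x (W c)| ≤ r * ‖W' c - W c‖ := by
    rw [← inner_sub_right]
    exact (abs_real_inner_le_norm _ _).trans (by gcongr)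
  have hδ (c : Fin K) : |inner ℝ x (W' c) - inner ℝ x (W c)| ≤ 2 * r * R := by
    refine (hinner c).trans ?_
    nlinarith [norm_sub_le (W' c) (W c), hW c, hW' c]
  have hε (c : Fin K) :
      |inner ℝ x (W' c) - inner ℝ x (W c)| ≤ r * √(∑ c, ‖W' c - W c‖ ^ 2) := by
    have hc : ‖W' c - W c‖ ^ 2 ≤ ∑ c, ‖W' c - W c‖ ^ 2 :=
      single_le_sum (f := fun c => ‖W' c - W c‖ ^ 2) (fun _ _ => by positivity) (mem_univ c)
    exact (hinner c).trans (by gcongr; exact le_sqrt_of_sq_le hc)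
  calc _ ≤ ‖x‖ * (|∑ j, exp (inner ℝ x (W' j)) - ∑ j, exp (inner ℝ x (W j))| /
          ∑ j, exp (inner ℝ x (W j))) :=
        sqrt_sum_norm_exp_mul_one_div_sub_smul_sq_le _ _ x
    _ ≤ r * (r * √(∑ c, ‖W' c - W c‖ ^ 2) * exp (2 * r * R)) := by
        gcongr
        exact div_le_of_le_mul₀ (by positivity) (by positivity)
          (abs_sum_exp_sub_sum_exp_le univ (fun c _ => hδ c) (fun c _ => hε c))
    _ = r ^ 2 * exp (2 * r * R) * √(∑ c, ‖W' c - W c‖ ^ 2) := by ring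

/-- Gradient error lemma: there is a constant `C` depending only on `r`, `R`, `K` (not on
the dimension `d`) such that for all bounded parameter matrices `W, W'` and any data point
`x` with `‖x‖ ≤ r`, the approximate gradient `G̃` (using the out-of-date variational value
`a(W)`) deviates from the true gradient `∇f(W')` by at most `C‖W' - W‖`. The `c`-th block
of `G̃ - ∇f(W')` is `exp(xᵀw'_c)(1/∑ⱼexp(xᵀwⱼ) - 1/∑ⱼexp(xᵀw'ⱼ))x`. -/
theorem gradient_error_lemma (K : ℕ) (hK : 0 < K) (r R : ℝ) (hr : 0 ≤ r) (hR : 0 ≤ R) :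
    ∃ C : ℝ, 0 ≤ C ∧
      ∀ (d : ℕ) (lam : ℝ) (_ : 0 < lam) (y : Fin K)
        (x : EuclideanSpace ℝ (Fin d)) (_ : ‖x‖ ≤ r)
        (W W' : Fin K → EuclideanSpace ℝ (Fin d))
        (_ : ∀ c, ‖W c‖ ≤ R) (_ : ∀ c, ‖W' c‖ ≤ R),
        Real.sqrt (∑ c, ‖(Real.exp (inner ℝ x (W' c) : ℝ) *
            (1 / (∑ j, Real.exp (inner ℝ x (W j) : ℝ))
              - 1 / (∑ j, Real.exp (inner ℝ x (W' j) : ℝ)))) • x‖ ^ 2)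
          ≤ C * Real.sqrt (∑ c, ‖W' c - W c‖ ^ 2) :=
  gradient_error_lemma_general K r R
end
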